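/- arXiv:2605.20868 — 2 statements merged into one kernel-verified Lean document; each statement's English description precedes it below -/
import Mathlib

section
/- Let a and a' be softmax distributions of logit vectors s and s' over {1,...,N} with |s_t - s'_t| ≤ Δ for all t. Then the total variation distance TV(a,a') = (1/2) Σ_t |a_t - a'_t| satisfies TV(a,a') ≤ tanh(Δ) = (e^{2Δ} - 1)/(e^{2Δ} + 1). -/
open Real Finset

/-!
If the logits move by at most `Δ`, each softmax weight changes by a factor in
`[e^{-2Δ}, e^{2Δ}]`. For two probability vectors whose ratios lie in `[1/K, K]`,
`|p - q| ≤ (K - 1) min(p, q)` pointwise, and `∑ min(p, q) = 1 - TV(p, q)`; hence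
`2 TV ≤ (K - 1)(1 - TV)`, i.e. `TV ≤ (K - 1)/(K + 1)`, which is `tanh Δ` for `K = e^{2Δ}`.
-/

theorem Real.tanh_eq_exp_two_mul (x : ℝ) :
    tanh x = (exp (2 * x) - 1) / (exp (2 * x) + 1) := by
  rw [tanh_eq, two_mul, exp_add, exp_neg]
  field_simp

theorem abs_sub_le_mul_min {p q K : ℝ} (hpq : p ≤ K * q) (hqp : q ≤ K * p) :
    |p - q| ≤ (K - 1) * min p q := by
  rcases le_total p q with hle | hle
  · rw [abs_of_nonpos (by linarith), min_eq_left hle]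
    linarith
  · rw [abs_of_nonneg (by linarith), min_eq_right hle]
    linarith

theorem half_sum_abs_sub_le_of_le_mul {ι : Type*} [Fintype ι] {p q : ι → ℝ} {K : ℝ}
    (hp : ∑ t, p t = 1) (hq : ∑ t, q t = 1)
    (hpq : ∀ t, p t ≤ K * q t) (hqp : ∀ t, q t ≤ K * p t) :
    (1 / 2) * ∑ t, |p t - q t| ≤ (K - 1) / (K + 1) := by
  have hK : 1 ≤ K := by
    have h := sum_le_sum fun t (_ : t ∈ univ) => add_le_add (hpq t) (hqp t)
    simp only [← mul_add, ← mul_sum, sum_add_distrib, hp, hq] at h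
    linarith
  have hmin : ∀ t, 2 * min (p t) (q t) = p t + q t - |p t - q t| := fun t => by
    linarith [min_add_max (p t) (q t), max_sub_min_eq_abs' (p t) (q t)]
  have hD : ∑ t, |p t - q t| ≤ (K - 1) * ((2 - ∑ t, |p t - q t|) / 2) :=
    calc ∑ t, |p t - q t| ≤ ∑ t, (K - 1) * min (p t) (q t) :=
          sum_le_sum fun t _ => abs_sub_le_mul_min (hpq t) (hqp t)
      _ = (K - 1) * ((2 - ∑ t, |p t - q t|) / 2) := by
          rw [← mul_sum]
          congr 1
          have h := sum_congr rfl fun t (_ : t ∈ univ) => hmin t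
          rw [← mul_sum, sum_sub_distrib, sum_add_distrib, hp, hq] at h
          linarith
  rw [le_div_iff₀ (by linarith)]
  linarith

section Softmax

variable {ι : Type*} [Fintype ι]

noncomputable def softmax (s : ι → ℝ) (t : ι) : ℝ :=
  exp (s t) / ∑ j, exp (s j)

theorem sum_exp_pos [Nonempty ι] (s : ι → ℝ) : 0 < ∑ j, exp (s j) :=
  sum_pos (fun j _ => exp_pos (s j)) univ_nonempty

theorem sum_softmax [Nonempty ι] (s : ι → ℝ) : ∑ t, softmax s t = 1 := by
  simp only [softmax, ← sum_div]
  exact div_self (sum_exp_pos s).ne'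

theorem exp_le_exp_mul_exp_of_abs_sub_le {x y Δ : ℝ} (h : |x - y| ≤ Δ) :
    exp x ≤ exp Δ * exp y := by
  rw [← exp_add, exp_le_exp]
  linarith [(abs_le.mp h).2]

theorem softmax_le_exp_two_mul_mul_softmax {s s' : ι → ℝ} {Δ : ℝ}
    (h : ∀ t, |s t - s' t| ≤ Δ) (t : ι) :
    softmax s t ≤ exp (2 * Δ) * softmax s' t := by
  have : Nonempty ι := ⟨t⟩
  have hZ : ∑ j, exp (s' j) ≤ exp Δ * ∑ j, exp (s j) := by
    rw [mul_sum]
    exact sum_le_sum fun j _ =>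
      exp_le_exp_mul_exp_of_abs_sub_le (abs_sub_comm (s j) (s' j) ▸ h j)
  rw [softmax, softmax, div_le_iff₀ (sum_exp_pos s)]
  calc exp (s t) ≤ exp Δ * exp (s' t) := exp_le_exp_mul_exp_of_abs_sub_le (h t)
    _ = exp Δ * (exp (s' t) / ∑ j, exp (s' j)) * ∑ j, exp (s' j) := by
        rw [mul_assoc, div_mul_cancel₀ _ (sum_exp_pos s').ne']
    _ ≤ exp Δ * (exp (s' t) / ∑ j, exp (s' j)) * (exp Δ * ∑ j, exp (s j)) := by gcongr
    _ = exp (2 * Δ) * (exp (s' t) / ∑ j, exp (s' j)) * ∑ j, exp (s j) := by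
        rw [two_mul, exp_add]; ring

end Softmax

theorem softmax_tv_bound_general (N : ℕ) (hN : 0 < N) (s s' : Fin N → ℝ) (Δ : ℝ)
    (h : ∀ t, |s t - s' t| ≤ Δ)
    (a a' : Fin N → ℝ)
    (ha : ∀ t, a t = Real.exp (s t) / ∑ j, Real.exp (s j))
    (ha' : ∀ t, a' t = Real.exp (s' t) / ∑ j, Real.exp (s' j)) :
    (1 / 2) * ∑ t, |a t - a' t| ≤ Real.tanh Δ ∧
      Real.tanh Δ = (Real.exp (2 * Δ) - 1) / (Real.exp (2 * Δ) + 1) := by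
  have : Nonempty (Fin N) := ⟨⟨0, hN⟩⟩
  obtain rfl : a = softmax s := funext ha
  obtain rfl : a' = softmax s' := funext ha'
  have h' : ∀ t, |s' t - s t| ≤ Δ := fun t => abs_sub_comm (s t) (s' t) ▸ h t
  refine ⟨?_, Real.tanh_eq_exp_two_mul Δ⟩
  rw [Real.tanh_eq_exp_two_mul]
  exact half_sum_abs_sub_le_of_le_mul (sum_softmax s) (sum_softmax s')
    (softmax_le_exp_two_mul_mul_softmax h) (softmax_le_exp_two_mul_mul_softmax h')

/-- Total-variation bound for perturbed softmax: `TV(a,a') ≤ tanh Δ`. -/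
theorem softmax_tv_bound (N : ℕ) (hN : 0 < N) (s s' : Fin N → ℝ) (Δ : ℝ)
    (hΔ : 0 ≤ Δ) (h : ∀ t, |s t - s' t| ≤ Δ)
    (a a' : Fin N → ℝ)
    (ha : ∀ t, a t = Real.exp (s t) / ∑ j, Real.exp (s j))
    (ha' : ∀ t, a' t = Real.exp (s' t) / ∑ j, Real.exp (s' j)) :
    (1 / 2) * ∑ t, |a t - a' t| ≤ Real.tanh Δ ∧
      Real.tanh Δ = (Real.exp (2 * Δ) - 1) / (Real.exp (2 * Δ) + 1) :=
  softmax_tv_bound_general N hN s s' Δ h a a' ha ha'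
end

section
/- Tail-restricted TV bound: let the token set be partitioned into F and T, let s' agree with s on F (s'_t = s_t for t∈F) and satisfy |s_t - s'_t| ≤ Δ on T. Let a = softmax(s), a' = softmax(s'), and α = Σ_{t∈T} a_t. Then TV(a, a') ≤ α·(e^{2Δ} - 1). -/
/-!
Write `w = exp ∘ s` and `w' = exp ∘ s'` for the unnormalized weights. The `ℓ¹` distance of two
normalized positive vectors is at most `2 ‖w - w'‖₁ / ‖w‖₁`, and `w - w'` vanishes on `F` while
`|w_t - w'_t| ≤ (e^Δ - 1) w_t` on `T`. Hence `TV(a, a') ≤ (e^Δ - 1) α ≤ α (e^{2Δ} - 1)`.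
-/

open Real Finset

namespace Real

theorem abs_exp_sub_one_le_exp_abs_sub_one (x : ℝ) : |exp x - 1| ≤ exp |x| - 1 := by
  rcases le_or_gt 0 x with hx | hx
  · rw [abs_of_nonneg hx, abs_of_nonneg (sub_nonneg.mpr (one_le_exp hx))]
  · have hexp : exp x * exp (-x) = 1 := by rw [← exp_add, add_neg_cancel, exp_zero]
    have hle : exp x ≤ 1 := exp_le_one_iff.mpr hx.le
    have hge : 1 ≤ exp (-x) := one_le_exp (by linarith)
    rw [abs_of_neg hx, abs_of_nonpos (by linarith)]
    nlinarith

theorem abs_exp_sub_exp_le (x y : ℝ) : |exp x - exp y| ≤ exp x * (exp |x - y| - 1) := by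
  have hfactor : exp x - exp y = -(exp x * (exp (y - x) - 1)) := by
    rw [mul_sub, ← exp_add, add_sub_cancel, mul_one, neg_sub]
  rw [hfactor, abs_neg, abs_mul, abs_of_pos (exp_pos x), abs_sub_comm x y]
  exact mul_le_mul_of_nonneg_left (abs_exp_sub_one_le_exp_abs_sub_one _) (exp_pos x).le

end Real

theorem Finset.sum_abs_exp_sub_exp_le {ι : Type*} {T : Finset ι} {s s' : ι → ℝ} {Δ : ℝ}
    (hT : ∀ t ∈ T, |s t - s' t| ≤ Δ) :
    ∑ t ∈ T, |exp (s t) - exp (s' t)| ≤ (exp Δ - 1) * ∑ t ∈ T, exp (s t) := by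
  rw [mul_sum]
  refine sum_le_sum fun t ht => (abs_exp_sub_exp_le _ _).trans ?_
  rw [mul_comm]
  gcongr
  exact hT t ht

theorem sum_abs_div_sum_sub_div_sum_le {ι : Type*} [Fintype ι] {w w' : ι → ℝ}
    (hw' : ∀ i, 0 ≤ w' i) (hZ : 0 < ∑ i, w i) (hZ' : 0 < ∑ i, w' i) :
    ∑ i, |w i / ∑ j, w j - w' i / ∑ j, w' j| ≤ 2 * (∑ i, |w i - w' i|) / ∑ i, w i := by
  set Z := ∑ j, w j
  set Z' := ∑ j, w' j
  have hmass_sub : |Z' - Z| ≤ ∑ i, |w i - w' i| := by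
    rw [← sum_sub_distrib]
    simpa only [abs_sub_comm (w' _)] using abs_sum_le_sum_abs (fun i => w' i - w i) univ
  have hsplit : ∀ i, w i / Z - w' i / Z' = (w i - w' i) / Z + w' i / Z' * ((Z' - Z) / Z) := by
    intro i; field_simp; ring
  calc ∑ i, |w i / Z - w' i / Z'|
      ≤ ∑ i, (|w i - w' i| / Z + w' i / Z' * (|Z' - Z| / Z)) := by
        refine sum_le_sum fun i _ => ?_
        refine (hsplit i ▸ abs_add_le _ _).trans_eq ?_
        simp only [abs_mul, abs_div, abs_of_pos hZ, abs_of_pos hZ', abs_of_nonneg (hw' i)]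
    -- `w' / Z'` is a probability vector.
    _ = (∑ i, |w i - w' i|) / Z + |Z' - Z| / Z := by
        rw [sum_add_distrib, ← sum_div, ← sum_mul, ← sum_div, div_self hZ'.ne', one_mul]
    _ ≤ 2 * (∑ i, |w i - w' i|) / Z := by
        rw [two_mul, add_div]
        gcongr

/-- Tail-restricted TV bound: if the scores agree on `F` and are perturbed by
at most `Δ` on `T`, then `TV(a,a') ≤ α (e^{2Δ} - 1)` where `α` is the true
attention mass of `T`. -/
theorem tail_restricted_tv_bound (N : ℕ) (hN : 0 < N)
    (s s' : Fin N → ℝ) (Δ : ℝ) (hΔ : 0 ≤ Δ)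
    (F T : Finset (Fin N)) (hFT : T = Fᶜ)
    (hF : ∀ t ∈ F, s' t = s t)
    (hT : ∀ t ∈ T, |s t - s' t| ≤ Δ)
    (a a' : Fin N → ℝ)
    (ha : ∀ t, a t = Real.exp (s t) / ∑ j, Real.exp (s j))
    (ha' : ∀ t, a' t = Real.exp (s' t) / ∑ j, Real.exp (s' j))
    (α : ℝ) (hα : α = ∑ t ∈ T, a t) :
    (1 / 2) * ∑ t, |a t - a' t| ≤ α * (Real.exp (2 * Δ) - 1) := by
  have hne : (univ : Finset (Fin N)).Nonempty := univ_nonempty_iff.mpr ⟨⟨0, hN⟩⟩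
  have hZ : 0 < ∑ j, exp (s j) := sum_pos (fun j _ => exp_pos (s j)) hne
  have hZ' : 0 < ∑ j, exp (s' j) := sum_pos (fun j _ => exp_pos (s' j)) hne
  have hsupp : ∑ t ∈ T, |exp (s t) - exp (s' t)| = ∑ t, |exp (s t) - exp (s' t)| :=
    sum_subset (subset_univ T) fun t _ htT => by
      rw [hF t (by simpa [hFT] using htT), sub_self, abs_zero]
  have hmass : ∑ t ∈ T, exp (s t) / ∑ j, exp (s j) = α := by
    simp only [hα, ha]
  have hα0 : 0 ≤ α := hmass ▸ sum_nonneg fun t _ => (div_pos (exp_pos _) hZ).le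
  calc (1 / 2) * ∑ t, |a t - a' t|
      ≤ (1 / 2) * (2 * (∑ t, |exp (s t) - exp (s' t)|) / ∑ j, exp (s j)) := by
        simp only [ha, ha']
        gcongr
        exact sum_abs_div_sum_sub_div_sum_le (fun t => (exp_pos _).le) hZ hZ'
    _ ≤ (exp Δ - 1) * α := by
        rw [← hsupp, ← hmass, ← sum_div, mul_div_assoc', one_div_mul_eq_div,
          mul_div_cancel_left₀ _ two_ne_zero, mul_div_assoc']
        gcongr
        exact sum_abs_exp_sub_exp_le hT
    _ ≤ α * (exp (2 * Δ) - 1) := by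
        rw [mul_comm]
        gcongr
        linarith
end
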